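/- arXiv:1903.12333 — 2 statements merged into one kernel-verified Lean document; each statement's English description precedes it below -/
import Mathlib

section
/- Let 𝒜 have size q ≥ 2, let A₁,…,A_m be a partition of 𝒜 into nonempty sets, and let C ⊆ 𝒜 × 𝒜 and an integer t with 0 < t < 2q be such that for every i ∈ {1,…,m}, every a ∈ A_i and every b ∈ 𝒜: 2·|C ∩ ({a} × 𝒜)| = t and 2q·|C ∩ (A_i × {b})| = t·|A_i|. Then (C, C̄) is an equitable 2-partition of the Hamming graph H(2,q) with quotient matrix [[t−2, 2q−t],[t, 2q−t−2]], which has eigenvalue λ₂(2,q) = −2. -/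
/-- `(C, Cᶜ)` is an equitable 2-partition of the graph `G` (both cells nonempty) with
quotient matrix `S`: every vertex of `C` has exactly `S 0 0` neighbors in `C` and `S 0 1`
neighbors in `Cᶜ`, and every vertex of `Cᶜ` has exactly `S 1 0` neighbors in `C` and
`S 1 1` neighbors in `Cᶜ`. -/
def IsEquitable2 {V : Type*} (G : SimpleGraph V) (C : Set V)
    (S : Matrix (Fin 2) (Fin 2) ℤ) : Prop :=
  C.Nonempty ∧ Cᶜ.Nonempty ∧
    (∀ x ∈ C, ((G.neighborSet x ∩ C).ncard : ℤ) = S 0 0 ∧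
      ((G.neighborSet x ∩ Cᶜ).ncard : ℤ) = S 0 1) ∧
    (∀ x ∈ Cᶜ, ((G.neighborSet x ∩ C).ncard : ℤ) = S 1 0 ∧
      ((G.neighborSet x ∩ Cᶜ).ncard : ℤ) = S 1 1)

/-- The Cartesian product `K_q □ K_{q'}` : the graph on pairs in which two vertices are
adjacent iff they differ in exactly one coordinate. -/
def rookGraph (α β : Type*) : SimpleGraph (α × β) where
  Adj x y := (x.1 = y.1 ∧ x.2 ≠ y.2) ∨ (x.1 ≠ y.1 ∧ x.2 = y.2)
  symm := ⟨by
    rintro ⟨a, b⟩ ⟨c, d⟩ (⟨h1, h2⟩ | ⟨h1, h2⟩)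
    · exact Or.inl ⟨h1.symm, h2.symm⟩
    · exact Or.inr ⟨h1.symm, h2.symm⟩⟩
  loopless := ⟨by rintro ⟨a, b⟩ (⟨h1, h2⟩ | ⟨h1, h2⟩) <;> simp_all⟩

/-!
Rows of `C` have `t/2` points by hypothesis; summing the part-column conditions over the
partition shows that every column has `t/2` points as well. In the rook graph the neighbours
of a vertex are the other points of its row and of its column, so its numbers of neighbours in
`C` and in `Cᶜ` only depend on whether it lies in `C`. The quotient matrix is `-2 • 1` plus a
matrix with two equal rows `(t, 2q - t)`, which kills `(2q - t, -t)`.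
-/

open scoped Function

namespace Set

theorem ncard_eq_sum_ncard_inter {α ι : Type*} [Finite α] [Fintype ι] {A : ι → Set α}
    (hdisj : Pairwise (Disjoint on A)) (hcover : ∀ a, ∃ i, a ∈ A i) (s : Set α) :
    s.ncard = ∑ i, (s ∩ A i).ncard := by
  have hs : s = ⋃ i, s ∩ A i := by
    rw [← inter_iUnion, eq_comm, inter_eq_left]
    exact fun a _ => mem_iUnion.2 (hcover a)
  conv_lhs => rw [hs]
  rw [ncard_iUnion_of_finite (fun _ => toFinite _)
    (fun i j hij => (hdisj hij).mono inter_subset_right inter_subset_right),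
    finsum_eq_sum_of_fintype]

theorem ncard_compl_inter_add_ncard_inter {α : Type*} [Finite α] (C L : Set α) :
    (Cᶜ ∩ L).ncard + (C ∩ L).ncard = L.ncard := by
  rw [← ncard_inter_add_ncard_sdiff_eq_ncard L C, sdiff_eq, inter_comm L Cᶜ, inter_comm L C,
    add_comm]

variable {α β : Type*}

theorem ncard_setOf_fst_eq [Finite β] (a : α) : {p : α × β | p.1 = a}.ncard = Nat.card β := by
  rw [show {p : α × β | p.1 = a} = {a} ×ˢ univ by ext; simp, ncard_prod, ncard_singleton,
    one_mul, ncard_univ]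

theorem ncard_setOf_snd_eq [Finite α] (b : β) : {p : α × β | p.2 = b}.ncard = Nat.card α := by
  rw [show {p : α × β | p.2 = b} = univ ×ˢ {b} by ext; simp, ncard_prod, ncard_singleton,
    mul_one, ncard_univ]

theorem ncard_inter_setOf_snd_eq_sum {ι : Type*} [Finite α] [Finite β] [Fintype ι]
    {A : ι → Set α} (hdisj : Pairwise (Disjoint on A)) (hcover : ∀ a, ∃ i, a ∈ A i)
    (C : Set (α × β)) (b : β) :
    (C ∩ {p | p.2 = b}).ncard = ∑ i, (C ∩ A i ×ˢ {b}).ncard := by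
  rw [ncard_eq_sum_ncard_inter (A := fun i => Prod.fst ⁻¹' A i)
    (fun i j hij => (hdisj hij).preimage _) (fun p => hcover p.1)]
  refine Finset.sum_congr rfl fun i _ => congrArg ncard ?_
  ext ⟨u, v⟩
  simp only [mem_inter_iff, mem_ofPred_eq, mem_preimage, mem_prod, mem_singleton_iff]
  tauto

theorem two_mul_ncard_inter_setOf_snd_eq {ι : Type*} [Finite α] [Finite β] [Fintype ι]
    {A : ι → Set α} (hdisj : Pairwise (Disjoint on A)) (hcover : ∀ a, ∃ i, a ∈ A i)
    {C : Set (α × β)} {t : ℤ} (hα : Nat.card α ≠ 0)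
    (hpart : ∀ i b, 2 * (Nat.card α : ℤ) * (C ∩ A i ×ˢ {b}).ncard = t * (A i).ncard) (b : β) :
    2 * ((C ∩ {p | p.2 = b}).ncard : ℤ) = t := by
  have hsum : ∑ i, ((A i).ncard : ℤ) = Nat.card α := by
    rw [← ncard_univ, ncard_eq_sum_ncard_inter hdisj hcover]
    simp
  have : (Nat.card α : ℤ) * (2 * (C ∩ {p | p.2 = b}).ncard) = Nat.card α * t := by
    rw [ncard_inter_setOf_snd_eq_sum hdisj hcover, Nat.cast_sum, Finset.mul_sum,
      Finset.mul_sum]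
    simp_rw [← mul_assoc, mul_comm _ (2 : ℤ), hpart, ← Finset.mul_sum, hsum, mul_comm]
  exact mul_left_cancel₀ (by exact_mod_cast hα) this

end Set

namespace rookGraph

variable {α β : Type*}

theorem neighborSet_inter (x : α × β) (D : Set (α × β)) :
    (rookGraph α β).neighborSet x ∩ D =
      (D ∩ {p | p.1 = x.1}) \ {x} ∪ (D ∩ {p | p.2 = x.2}) \ {x} := by
  obtain ⟨a, b⟩ := x
  ext ⟨u, v⟩
  simp only [SimpleGraph.mem_neighborSet, rookGraph, Set.mem_inter_iff, Set.mem_union,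
    Set.mem_sdiff, Set.mem_singleton_iff, Set.mem_ofPred_eq, Prod.mk.injEq]
  grind

theorem ncard_neighborSet_inter [Finite α] [Finite β] (x : α × β) (D : Set (α × β)) :
    ((rookGraph α β).neighborSet x ∩ D).ncard =
      ((D ∩ {p | p.1 = x.1}) \ {x}).ncard + ((D ∩ {p | p.2 = x.2}) \ {x}).ncard := by
  rw [neighborSet_inter, Set.ncard_union_eq]
  refine Set.disjoint_left.2 fun p hrow hcol => hrow.2 ?_
  exact Prod.ext hrow.1.2 hcol.1.2

theorem ncard_neighborSet_inter_add_two [Finite α] [Finite β] {x : α × β} {D : Set (α × β)}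
    (hx : x ∈ D) :
    ((rookGraph α β).neighborSet x ∩ D).ncard + 2 =
      (D ∩ {p | p.1 = x.1}).ncard + (D ∩ {p | p.2 = x.2}).ncard := by
  rw [ncard_neighborSet_inter, ← Set.ncard_sdiff_singleton_add_one (s := D ∩ {p | p.1 = x.1})
    ⟨hx, rfl⟩, ← Set.ncard_sdiff_singleton_add_one (s := D ∩ {p | p.2 = x.2}) ⟨hx, rfl⟩]
  ring

theorem ncard_neighborSet_inter_of_notMem [Finite α] [Finite β] {x : α × β} {D : Set (α × β)}
    (hx : x ∉ D) :
    ((rookGraph α β).neighborSet x ∩ D).ncard =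
      (D ∩ {p | p.1 = x.1}).ncard + (D ∩ {p | p.2 = x.2}).ncard := by
  rw [ncard_neighborSet_inter, Set.sdiff_singleton_eq_self (fun h => hx h.1),
    Set.sdiff_singleton_eq_self (fun h => hx h.1)]

theorem isEquitable2_of_ncard_lines [Finite α] [Finite β] [Nonempty α] {C : Set (α × β)}
    {r c : ℕ} (hr0 : 0 < r) (hr : r < Nat.card β)
    (hrow : ∀ a, (C ∩ {p | p.1 = a}).ncard = r) (hcol : ∀ b, (C ∩ {p | p.2 = b}).ncard = c) :
    IsEquitable2 (rookGraph α β) C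
      ![![r + c - 2, Nat.card β - r + (Nat.card α - c)],
        ![r + c, Nat.card β - r + (Nat.card α - c) - 2]] := by
  have hrowCompl : ∀ a, (Cᶜ ∩ {p | p.1 = a}).ncard + r = Nat.card β := fun a => by
    rw [← hrow a, Set.ncard_compl_inter_add_ncard_inter, Set.ncard_setOf_fst_eq]
  have hcolCompl : ∀ b, (Cᶜ ∩ {p | p.2 = b}).ncard + c = Nat.card α := fun b => by
    rw [← hcol b, Set.ncard_compl_inter_add_ncard_inter, Set.ncard_setOf_snd_eq]
  obtain ⟨a⟩ := ‹Nonempty α›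
  refine ⟨?_, ?_, fun x hx => ?_, fun x hx => ?_⟩
  · have := hrow a
    exact (Set.nonempty_of_ncard_ne_zero (by omega : (C ∩ {p | p.1 = a}).ncard ≠ 0)).mono
      Set.inter_subset_left
  · have := hrowCompl a
    exact (Set.nonempty_of_ncard_ne_zero (by omega : (Cᶜ ∩ {p | p.1 = a}).ncard ≠ 0)).mono
      Set.inter_subset_left
  · have hC := ncard_neighborSet_inter_add_two hx
    have hCompl := ncard_neighborSet_inter_of_notMem (D := Cᶜ) (not_not_intro hx)
    have := hrow x.1
    have := hcol x.2
    have := hrowCompl x.1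
    have := hcolCompl x.2
    simp only [Matrix.cons_val_zero, Matrix.cons_val_one]
    omega
  · have hC := ncard_neighborSet_inter_of_notMem hx
    have hCompl := ncard_neighborSet_inter_add_two (D := Cᶜ) hx
    have := hrow x.1
    have := hcol x.2
    have := hrowCompl x.1
    have := hcolCompl x.2
    simp only [Matrix.cons_val_zero, Matrix.cons_val_one]
    omega

end rookGraph

theorem Matrix.mulVec_eq_neg_two_smul {R : Type*} [CommRing R] (a b : R) :
    (!![a - 2, b; a, b - 2]).mulVec ![b, -a] = (-2 : R) • ![b, -a] := by
  ext i
  fin_cases i <;> simp [Matrix.mulVec, dotProduct, Fin.sum_univ_two] <;> ring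

theorem stmt7_general {𝒜 : Type*} [Fintype 𝒜] (q : ℕ)
    (hq : Fintype.card 𝒜 = q)
    (m : ℕ) (A : Fin m → Set 𝒜)
    (hdisj : ∀ i j, i ≠ j → Disjoint (A i) (A j))
    (hcover : ∀ a : 𝒜, ∃ i, a ∈ A i)
    (C : Set (𝒜 × 𝒜)) (t : ℤ) (ht0 : 0 < t) (ht1 : t < 2 * q)
    (hrow : ∀ (i : Fin m), ∀ a ∈ A i,
      2 * ((C ∩ {p : 𝒜 × 𝒜 | p.1 = a}).ncard : ℤ) = t)
    (hcol : ∀ (i : Fin m), ∀ a ∈ A i, ∀ b : 𝒜,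
      2 * (q : ℤ) * ((C ∩ (A i ×ˢ ({b} : Set 𝒜))).ncard : ℤ) = t * ((A i).ncard : ℤ)) :
    IsEquitable2 (rookGraph 𝒜 𝒜) C
      ![![t - 2, 2 * (q : ℤ) - t], ![t, 2 * (q : ℤ) - t - 2]] ∧
    (∃ v : Fin 2 → ℚ, v ≠ 0 ∧
      (Matrix.map ![![t - 2, 2 * (q : ℤ) - t], ![t, 2 * (q : ℤ) - t - 2]]
          ((↑) : ℤ → ℚ)).mulVec v = (-2 : ℚ) • v) := by
  have hcard : Nat.card 𝒜 = q := Nat.card_eq_fintype_card.trans hq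
  have : Nonempty 𝒜 := (Nat.card_pos_iff.1 (by omega)).1
  have hcol₂ : ∀ b, 2 * ((C ∩ {p : 𝒜 × 𝒜 | p.2 = b}).ncard : ℤ) = t := by
    refine Set.two_mul_ncard_inter_setOf_snd_eq (fun i j => hdisj i j) hcover (by omega)
      fun i b => ?_
    rcases (A i).eq_empty_or_nonempty with h | ⟨a, ha⟩
    · simp [h]
    · rw [hcard]; exact hcol i a ha b
  set k := (C ∩ {p : 𝒜 × 𝒜 | p.1 = Classical.arbitrary 𝒜}).ncard
  have htk : t = 2 * k := by
    obtain ⟨i, hi⟩ := hcover (Classical.arbitrary 𝒜); linarith [hrow i _ hi]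
  have hrowk : ∀ a, (C ∩ {p : 𝒜 × 𝒜 | p.1 = a}).ncard = k := fun a => by
    obtain ⟨i, hi⟩ := hcover a; have := hrow i a hi; omega
  have hcolk : ∀ b, (C ∩ {p : 𝒜 × 𝒜 | p.2 = b}).ncard = k := fun b => by
    have := hcol₂ b; omega
  have heq := rookGraph.isEquitable2_of_ncard_lines (α := 𝒜) (by omega) (by omega) hrowk hcolk
  rw [hcard] at heq
  refine ⟨?_, ![2 * q - t, -t], fun h => by simpa [ht0.ne'] using congrFun h 1, ?_⟩
  · refine (congrArg _ ?_).mpr heq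
    ext i j
    fin_cases i <;> fin_cases j <;> simp <;> omega
  · convert Matrix.mulVec_eq_neg_two_smul (t : ℚ) (2 * q - t) using 2
    ext i j
    fin_cases i <;> fin_cases j <;> simp [Matrix.map]

/-- Let `A₁, …, A_m` partition `𝒜` (with `|𝒜| = q`) into nonempty sets and
let `C ⊆ 𝒜 × 𝒜` and `0 < t < 2q` be such that every row `{a} × 𝒜` contains `t/2`
elements of `C` and every part-column `A_i × {b}` contains `t·|A_i|/(2q)` elements of
`C`. Then `(C, Cᶜ)` is an equitable 2-partition of `H(2,q)` with quotient matrix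
`[[t-2, 2q-t], [t, 2q-t-2]]`, which has eigenvalue `λ₂(2,q) = -2`. -/
theorem stmt7 {𝒜 : Type*} [Fintype 𝒜] [DecidableEq 𝒜] (q : ℕ)
    (hq : Fintype.card 𝒜 = q) (hq2 : 2 ≤ q)
    (m : ℕ) (A : Fin m → Set 𝒜)
    (hne : ∀ i, (A i).Nonempty)
    (hdisj : ∀ i j, i ≠ j → Disjoint (A i) (A j))
    (hcover : ∀ a : 𝒜, ∃ i, a ∈ A i)
    (C : Set (𝒜 × 𝒜)) (t : ℤ) (ht0 : 0 < t) (ht1 : t < 2 * q)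
    (hrow : ∀ (i : Fin m), ∀ a ∈ A i,
      2 * ((C ∩ {p : 𝒜 × 𝒜 | p.1 = a}).ncard : ℤ) = t)
    (hcol : ∀ (i : Fin m), ∀ a ∈ A i, ∀ b : 𝒜,
      2 * (q : ℤ) * ((C ∩ (A i ×ˢ ({b} : Set 𝒜))).ncard : ℤ) = t * ((A i).ncard : ℤ)) :
    IsEquitable2 (rookGraph 𝒜 𝒜) C
      ![![t - 2, 2 * (q : ℤ) - t], ![t, 2 * (q : ℤ) - t - 2]] ∧
    (∃ v : Fin 2 → ℚ, v ≠ 0 ∧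
      (Matrix.map ![![t - 2, 2 * (q : ℤ) - t], ![t, 2 * (q : ℤ) - t - 2]]
          ((↑) : ℤ → ℚ)).mulVec v = (-2 : ℚ) • v) :=
  stmt7_general q hq m A hdisj hcover C t ht0 ht1 hrow hcol
end

section
/- Let n ≥ 2, let 𝒜 have size q ≥ 2, let A₁,…,A_{n−1} be a partition of 𝒜 into nonempty sets, and let C ⊆ 𝒜 × 𝒜 and an integer t with 0 < t < 2q be such that for every i ∈ {1,…,n−1}, every a ∈ A_i and every b ∈ 𝒜: 2·|C ∩ ({a} × 𝒜)| = t and 2q·|C ∩ (A_i × {b})| = t·|A_i|. Define C_π⁺ = {x ∈ 𝒜^n : (x₁, x_{i+1}) ∈ C, where i is the unique index with x₁ ∈ A_i}. Then (C_π⁺, its complement) is an equitable 2-partition of the Hamming graph H(n,q) with quotient matrix [[t−2+(n−2)(q−1), 2q−t],[t, 2q−t−2+(n−2)(q−1)]], which has eigenvalue λ₂(n,q) = (q−1)n − 2q. -/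
/-- The Hamming graph `H(n,q)` on the vertex set `𝒜ⁿ` (where `|𝒜| = q`): two vertices are
adjacent iff they differ in exactly one coordinate. -/
def hammingGraph (n : ℕ) (𝒜 : Type*) [DecidableEq 𝒜] : SimpleGraph (Fin n → 𝒜) where
  Adj x y := hammingDist x y = 1
  symm := ⟨fun x y h => (hammingDist_comm y x).trans h⟩
  loopless := ⟨fun x h => by simp [hammingDist_self] at h⟩

/-!
Write `σ a` for the index of the cell containing `a`, so that `x ∈ C_π⁺` iff
`(x 0, x (σ (x 0)).succ) ∈ C`. Among the `q` values of a single coordinate of `x`, the number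
giving a word of `C_π⁺` is `t/2` for coordinate `0` (the column condition, summed over the cells),
`t/2` for the coordinate selected by `x 0` (the row condition), and `q` or `0` for each of the
`n - 2` remaining coordinates, according as `x ∈ C_π⁺` or not. Discarding `x` itself once per
coordinate gives `t - 2 + (n - 2)(q - 1)` neighbours in `C_π⁺` for `x ∈ C_π⁺` and `t` for
`x ∉ C_π⁺`; the other entries of the quotient matrix follow from the degree `n(q - 1)`.
-/

open Function

lemma ncard_setOf_ne_and_add {α : Type*} [Finite α] (P : α → Prop) (c : α) [Decidable (P c)] :
    {a | a ≠ c ∧ P a}.ncard + (if P c then 1 else 0) = {a | P a}.ncard := by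
  split_ifs with hc
  · rw [← Set.ncard_sdiff_singleton_add_one (s := {a | P a}) hc, Set.sdiff_eq, Set.inter_comm]
    rfl
  · rw [add_zero]
    congr
    ext a
    exact ⟨And.right, fun h => ⟨fun e => hc (e ▸ h), h⟩⟩

lemma ncard_inter_setOf_fst_eq {α β : Type*} (C : Set (α × β)) (a : α) :
    (C ∩ {p | p.1 = a}).ncard = {b | (a, b) ∈ C}.ncard := by
  rw [← Set.ncard_image_of_injective {b | (a, b) ∈ C} (Prod.mk_right_injective a)]
  congr 1
  ext ⟨a', b⟩
  simp only [Set.mem_inter_iff, Set.mem_ofPred_eq, Set.mem_image, Prod.mk.injEq]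
  constructor
  · rintro ⟨h, rfl⟩
    exact ⟨b, h, rfl, rfl⟩
  · rintro ⟨b, h, rfl, rfl⟩
    exact ⟨h, rfl⟩

section Hamming

variable {𝒜 : Type*} [DecidableEq 𝒜] {n : ℕ}

lemma hammingGraph_adj_iff {x y : Fin n → 𝒜} :
    (hammingGraph n 𝒜).Adj x y ↔ ∃ j, ∃ a ≠ x j, update x j a = y := by
  change (Finset.univ.filter fun i => x i ≠ y i).card = 1 ↔ _
  rw [Finset.card_eq_one]
  constructor
  · rintro ⟨j, hj⟩
    have hne (i : Fin n) : x i ≠ y i ↔ i = j := by simpa using Finset.ext_iff.mp hj i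
    refine ⟨j, y j, fun h => (hne j).2 rfl h.symm, funext fun i => ?_⟩
    rcases eq_or_ne i j with rfl | hij
    · exact update_self ..
    · rw [update_of_ne hij]
      exact not_not.mp fun h => hij ((hne i).1 h)
  · rintro ⟨j, a, ha, rfl⟩
    refine ⟨j, Finset.ext fun i => ?_⟩
    rcases eq_or_ne i j with rfl | hij <;> simp [update_of_ne, *, Ne.symm ha]

lemma hammingGraph_ncard_neighborSet_inter [Finite 𝒜] (x : Fin n → 𝒜) (S : Set (Fin n → 𝒜)) :
    ((hammingGraph n 𝒜).neighborSet x ∩ S).ncard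
      = ∑ j, {a | a ≠ x j ∧ update x j a ∈ S}.ncard := by
  have hunion : (hammingGraph n 𝒜).neighborSet x ∩ S
      = ⋃ j, update x j '' {a | a ≠ x j ∧ update x j a ∈ S} := by
    ext y
    simp only [Set.mem_inter_iff, SimpleGraph.mem_neighborSet, hammingGraph_adj_iff,
      Set.mem_iUnion, Set.mem_image, Set.mem_ofPred_eq]
    constructor
    · rintro ⟨⟨j, a, ha, rfl⟩, hS⟩
      exact ⟨j, a, ⟨ha, hS⟩, rfl⟩
    · rintro ⟨j, a, ⟨ha, hS⟩, rfl⟩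
      exact ⟨⟨j, a, ha, rfl⟩, hS⟩
  have hdisj : Pairwise (Disjoint on fun j => update x j '' {a | a ≠ x j ∧ update x j a ∈ S}) := by
    intro i j hij
    rw [onFun, Set.disjoint_left]
    rintro _ ⟨a, ⟨ha, -⟩, rfl⟩ ⟨b, -, hba⟩
    have := congrFun hba i
    rw [update_of_ne hij, update_self] at this
    exact ha this.symm
  rw [hunion, Set.ncard_iUnion_of_finite (fun _ => Set.toFinite _) hdisj, finsum_eq_sum_of_fintype]
  exact Finset.sum_congr rfl fun j _ => Set.ncard_image_of_injective _ (update_injective x j)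

lemma hammingGraph_ncard_neighborSet_add [Fintype 𝒜] (x : Fin n → 𝒜) :
    ((hammingGraph n 𝒜).neighborSet x).ncard + n = n * Fintype.card 𝒜 := by
  have hcoord (c : 𝒜) : {a | a ≠ c}.ncard + 1 = Fintype.card 𝒜 := by
    simpa [Set.ncard_univ] using ncard_setOf_ne_and_add (fun _ : 𝒜 => True) c
  rw [← Set.inter_univ ((hammingGraph n 𝒜).neighborSet x), hammingGraph_ncard_neighborSet_inter]
  calc ∑ j, {a | a ≠ x j ∧ update x j a ∈ Set.univ}.ncard + n
      = ∑ j : Fin n, ({a | a ≠ x j}.ncard + 1) := by simp [Finset.sum_add_distrib]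
    _ = n * Fintype.card 𝒜 := by
      simp only [hcoord, Finset.sum_const, Finset.card_univ, Fintype.card_fin, smul_eq_mul]

lemma hammingGraph_ncard_neighborSet_inter_add_compl [Fintype 𝒜] (x : Fin n → 𝒜)
    (S : Set (Fin n → 𝒜)) :
    ((hammingGraph n 𝒜).neighborSet x ∩ S).ncard + ((hammingGraph n 𝒜).neighborSet x ∩ Sᶜ).ncard
      + n = n * Fintype.card 𝒜 := by
  rw [← Set.sdiff_eq, Set.ncard_inter_add_ncard_sdiff_eq_ncard, hammingGraph_ncard_neighborSet_add]

end Hamming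

section SelectedPair

variable {𝒜 : Type*} {m : ℕ} (σ : 𝒜 → Fin (m + 1)) (C : Set (𝒜 × 𝒜))

/-- With `σ a` the index of the cell containing `a`, this is the paper's `C_π⁺`: the paper's
coordinates `x₁` and `x_{i+1}` are `x 0` and `x i.succ` here. -/
def selectedPairSet : Set (Fin (m + 2) → 𝒜) := {x | (x 0, x (σ (x 0)).succ) ∈ C}

variable {σ C}

lemma update_zero_mem_selectedPairSet (x : Fin (m + 2) → 𝒜) (a : 𝒜) :
    update x 0 a ∈ selectedPairSet σ C ↔ (a, x (σ a).succ) ∈ C := by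
  simp [selectedPairSet]

lemma update_selected_mem_selectedPairSet (x : Fin (m + 2) → 𝒜) (b : 𝒜) :
    update x (σ (x 0)).succ b ∈ selectedPairSet σ C ↔ (x 0, b) ∈ C := by
  simp [selectedPairSet, update_of_ne (Fin.succ_ne_zero _).symm]

lemma update_mem_selectedPairSet_of_ne {x : Fin (m + 2) → 𝒜} {k : Fin (m + 1)}
    (hk : k ≠ σ (x 0)) (a : 𝒜) :
    update x k.succ a ∈ selectedPairSet σ C ↔ x ∈ selectedPairSet σ C := by
  simp [selectedPairSet, update_of_ne (Fin.succ_ne_zero _).symm,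
    update_of_ne (Fin.succ_injective _ |>.ne hk.symm)]

variable [Fintype 𝒜]

open scoped Classical in
lemma sum_ncard_update_mem_selectedPairSet (x : Fin (m + 2) → 𝒜) :
    (∑ j, ({a | update x j a ∈ selectedPairSet σ C}.ncard : ℤ))
      = {a | (a, x (σ a).succ) ∈ C}.ncard + {b | (x 0, b) ∈ C}.ncard
        + if x ∈ selectedPairSet σ C then (m : ℤ) * Fintype.card 𝒜 else 0 := by
  have hrest : ∀ k ∈ Finset.univ.erase (σ (x 0)),
      ({a | update x k.succ a ∈ selectedPairSet σ C}.ncard : ℤ)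
        = if x ∈ selectedPairSet σ C then Fintype.card 𝒜 else 0 := by
    intro k hk
    simp_rw [update_mem_selectedPairSet_of_ne (Finset.ne_of_mem_erase hk)]
    split_ifs <;> simp [*]
  simp_rw [Fin.sum_univ_succ (n := m + 1), update_zero_mem_selectedPairSet,
    ← Finset.add_sum_erase _ _ (Finset.mem_univ (σ (x 0))), update_selected_mem_selectedPairSet,
    Finset.sum_congr rfl hrest, Finset.sum_const, Finset.card_erase_of_mem (Finset.mem_univ _),
    Finset.card_univ, Fintype.card_fin]
  split_ifs <;> simp [add_assoc]

open scoped Classical in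
lemma ncard_neighborSet_inter_selectedPairSet [DecidableEq 𝒜] (t : ℤ)
    (hrow : ∀ a, 2 * ({b | (a, b) ∈ C}.ncard : ℤ) = t)
    (hcol : ∀ y : Fin (m + 1) → 𝒜, 2 * ({a | (a, y (σ a)) ∈ C}.ncard : ℤ) = t)
    (x : Fin (m + 2) → 𝒜) :
    (((hammingGraph (m + 2) 𝒜).neighborSet x ∩ selectedPairSet σ C).ncard : ℤ)
      = t + if x ∈ selectedPairSet σ C then (m : ℤ) * (Fintype.card 𝒜 - 1) - 2 else 0 := by
  have hcoord (j : Fin (m + 2)) : ({a | a ≠ x j ∧ update x j a ∈ selectedPairSet σ C}.ncard : ℤ)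
      = {a | update x j a ∈ selectedPairSet σ C}.ncard
        - if x ∈ selectedPairSet σ C then 1 else 0 := by
    have := ncard_setOf_ne_and_add (update x j · ∈ selectedPairSet σ C) (x j)
    simp only [update_eq_self] at this
    rw [← this]
    push_cast
    ring
  have hr := hrow (x 0)
  have hc := hcol (fun k => x k.succ)
  rw [hammingGraph_ncard_neighborSet_inter]
  push_cast
  rw [Finset.sum_congr rfl fun j _ => hcoord j, Finset.sum_sub_distrib,
    sum_ncard_update_mem_selectedPairSet]
  split_ifs
  · simp only [Finset.sum_const, Finset.card_univ, Fintype.card_fin, nsmul_eq_mul]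
    push_cast
    linarith
  · rw [Finset.sum_const_zero]
    linarith

lemma selectedPairSet_nonempty_and_compl_nonempty {a : 𝒜} (h0 : 0 < {b | (a, b) ∈ C}.ncard)
    (h1 : {b | (a, b) ∈ C}.ncard < Fintype.card 𝒜) :
    (selectedPairSet σ C).Nonempty ∧ (selectedPairSet σ C)ᶜ.Nonempty := by
  obtain ⟨b₁, hb₁⟩ := (Set.ncard_pos).1 h0
  obtain ⟨b₂, hb₂⟩ := (Set.ne_univ_iff_exists_notMem {b | (a, b) ∈ C}).1 fun h => by
    rw [h, Set.ncard_univ, Nat.card_eq_fintype_card] at h1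
    exact h1.false
  exact ⟨⟨_, (update_selected_mem_selectedPairSet (fun _ => a) b₁).2 hb₁⟩,
    ⟨_, (update_selected_mem_selectedPairSet (fun _ => a) b₂).not.2 hb₂⟩⟩

theorem isEquitable2_selectedPairSet [DecidableEq 𝒜] {t : ℤ} (ht0 : 0 < t)
    (ht1 : t < 2 * Fintype.card 𝒜)
    (hrow : ∀ a, 2 * ({b | (a, b) ∈ C}.ncard : ℤ) = t)
    (hcol : ∀ y : Fin (m + 1) → 𝒜, 2 * ({a | (a, y (σ a)) ∈ C}.ncard : ℤ) = t) :
    IsEquitable2 (hammingGraph (m + 2) 𝒜) (selectedPairSet σ C)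
      ![![t - 2 + (m : ℤ) * ((Fintype.card 𝒜 : ℤ) - 1), 2 * (Fintype.card 𝒜 : ℤ) - t],
        ![t, 2 * (Fintype.card 𝒜 : ℤ) - t - 2 + (m : ℤ) * ((Fintype.card 𝒜 : ℤ) - 1)]] := by
  have : Nonempty 𝒜 := Fintype.card_pos_iff.1 (by omega)
  have a : 𝒜 := Classical.arbitrary 𝒜
  have hrow_a := hrow a
  have hcount (x) := ncard_neighborSet_inter_selectedPairSet t hrow hcol x
  have htot (x : Fin (m + 2) → 𝒜) :=
    hammingGraph_ncard_neighborSet_inter_add_compl x (selectedPairSet σ C)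
  obtain ⟨hne, hne_compl⟩ :=
    selectedPairSet_nonempty_and_compl_nonempty (σ := σ) (C := C) (a := a) (by omega) (by omega)
  refine ⟨hne, hne_compl, fun x hx => ?_, fun x hx => ?_⟩
  · have hin := hcount x
    have htot := htot x
    rw [if_pos hx] at hin
    zify at htot
    constructor <;> simp <;> linarith
  · have hin := hcount x
    have htot := htot x
    rw [if_neg hx] at hin
    zify at htot
    constructor <;> simp <;> linarith

end SelectedPair

section Partition

variable {ι α β : Type*} {A : ι → Set α} {σ : α → ι}

lemma mem_iff_eq_of_pairwise_disjoint (hσ : ∀ a, a ∈ A (σ a)) (hdisj : Pairwise (Disjoint on A))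
    {a : α} {i : ι} : a ∈ A i ↔ σ a = i :=
  ⟨fun ha => by_contra fun hne => Set.disjoint_left.1 (hdisj hne) (hσ a) ha, fun h => h ▸ hσ a⟩

lemma sum_ncard_eq_card_of_pairwise_disjoint [Fintype ι] [Finite α]
    (hcover : ∀ a, ∃ i, a ∈ A i) (hdisj : Pairwise (Disjoint on A)) :
    ∑ i, (A i).ncard = Nat.card α := by
  rw [← Set.ncard_univ, ← Set.iUnion_eq_univ_iff.2 hcover,
    Set.ncard_iUnion_of_finite (fun _ => Set.toFinite _) hdisj, finsum_eq_sum_of_fintype]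

lemma ncard_setOf_mem_eq_sum [Fintype ι] [Finite α] [Finite β] (hσ : ∀ a, a ∈ A (σ a))
    (hdisj : Pairwise (Disjoint on A)) (C : Set (α × β)) (y : ι → β) :
    {a | (a, y (σ a)) ∈ C}.ncard = ∑ i, (C ∩ A i ×ˢ {y i}).ncard := by
  have hgraph : (fun a => (a, y (σ a))) '' {a | (a, y (σ a)) ∈ C} = ⋃ i, C ∩ A i ×ˢ {y i} := by
    ext ⟨a, b⟩
    simp only [Set.mem_image, Set.mem_iUnion, Set.mem_inter_iff, Set.mem_prod,
      Set.mem_singleton_iff, mem_iff_eq_of_pairwise_disjoint hσ hdisj, Prod.mk.injEq]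
    constructor
    · rintro ⟨a, ha, rfl, rfl⟩
      exact ⟨σ a, ha, rfl, rfl⟩
    · rintro ⟨_, hC, rfl, rfl⟩
      exact ⟨a, hC, rfl, rfl⟩
  have hdisj' : Pairwise (Disjoint on fun i => C ∩ A i ×ˢ {y i}) := fun i j hij =>
    (Set.disjoint_prod.2 (Or.inl (hdisj hij))).mono Set.inter_subset_right Set.inter_subset_right
  have hinj : Injective fun a => (a, y (σ a)) := fun _ _ h => congrArg Prod.fst h
  rw [← Set.ncard_image_of_injective _ hinj, hgraph,
    Set.ncard_iUnion_of_finite (fun _ => Set.toFinite _) hdisj', finsum_eq_sum_of_fintype]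

lemma two_mul_ncard_setOf_mem_eq [Fintype ι] [Fintype α] [Nonempty α] [Finite β]
    (hσ : ∀ a, a ∈ A (σ a)) (hdisj : Pairwise (Disjoint on A)) {C : Set (α × β)} {t : ℤ}
    (hcell : ∀ i b, 2 * (Fintype.card α : ℤ) * (C ∩ A i ×ˢ {b}).ncard = t * (A i).ncard)
    (y : ι → β) :
    2 * ({a | (a, y (σ a)) ∈ C}.ncard : ℤ) = t := by
  have hcard := sum_ncard_eq_card_of_pairwise_disjoint (fun a => ⟨σ a, hσ a⟩) hdisj
  rw [Nat.card_eq_fintype_card] at hcard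
  apply mul_left_cancel₀ (Nat.cast_ne_zero.2 Fintype.card_ne_zero : (Fintype.card α : ℤ) ≠ 0)
  calc (Fintype.card α : ℤ) * (2 * {a | (a, y (σ a)) ∈ C}.ncard)
      = ∑ i, 2 * (Fintype.card α : ℤ) * (C ∩ A i ×ˢ {y i}).ncard := by
        rw [ncard_setOf_mem_eq_sum hσ hdisj, ← Finset.mul_sum]
        push_cast
        ring
    _ = Fintype.card α * t := by
        rw [Finset.sum_congr rfl fun i _ => hcell i (y i), ← Finset.mul_sum, ← hcard]
        push_cast
        ring

end Partition

lemma quotientMatrix_mulVec_eq_smul (q m : ℕ) (t : ℤ) :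
    (Matrix.map ![![t - 2 + (m : ℤ) * ((q : ℤ) - 1), 2 * (q : ℤ) - t],
        ![t, 2 * (q : ℤ) - t - 2 + (m : ℤ) * ((q : ℤ) - 1)]] ((↑) : ℤ → ℚ)).mulVec
        ![2 * (q : ℚ) - t, -t]
      = (((q : ℚ) - 1) * ((m : ℚ) + 2) - 2 * q) • ![2 * (q : ℚ) - t, -t] := by
  ext j
  fin_cases j <;> simp [Matrix.mulVec, Matrix.map, dotProduct, Fin.sum_univ_two] <;> ring

lemma exists_ne_zero_quotientMatrix_mulVec_eq_smul (q m : ℕ) {t : ℤ} (ht : t ≠ 0) :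
    ∃ v : Fin 2 → ℚ, v ≠ 0 ∧
      (Matrix.map ![![t - 2 + (m : ℤ) * ((q : ℤ) - 1), 2 * (q : ℤ) - t],
          ![t, 2 * (q : ℤ) - t - 2 + (m : ℤ) * ((q : ℤ) - 1)]]
          ((↑) : ℤ → ℚ)).mulVec v = (((q : ℚ) - 1) * ((m : ℚ) + 2) - 2 * q) • v :=
  ⟨_, fun h => ht (by simpa using congrFun h 1), quotientMatrix_mulVec_eq_smul q m t⟩

theorem stmt8_general {𝒜 : Type*} [Fintype 𝒜] [DecidableEq 𝒜] (q : ℕ)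
    (hq : Fintype.card 𝒜 = q)
    (m : ℕ) (A : Fin (m + 1) → Set 𝒜)
    (hdisj : ∀ i j, i ≠ j → Disjoint (A i) (A j))
    (hcover : ∀ a : 𝒜, ∃ i, a ∈ A i)
    (C : Set (𝒜 × 𝒜)) (t : ℤ) (ht0 : 0 < t) (ht1 : t < 2 * q)
    (hrow : ∀ (i : Fin (m + 1)), ∀ a ∈ A i,
      2 * ((C ∩ {p : 𝒜 × 𝒜 | p.1 = a}).ncard : ℤ) = t)
    (hcol : ∀ (i : Fin (m + 1)), ∀ a ∈ A i, ∀ b : 𝒜,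
      2 * (q : ℤ) * ((C ∩ (A i ×ˢ ({b} : Set 𝒜))).ncard : ℤ) = t * ((A i).ncard : ℤ)) :
    IsEquitable2 (hammingGraph (m + 2) 𝒜)
      {x : Fin (m + 2) → 𝒜 | ∃ i : Fin (m + 1), x 0 ∈ A i ∧ (x 0, x i.succ) ∈ C}
      ![![t - 2 + (m : ℤ) * ((q : ℤ) - 1), 2 * (q : ℤ) - t],
        ![t, 2 * (q : ℤ) - t - 2 + (m : ℤ) * ((q : ℤ) - 1)]] ∧
    (∃ v : Fin 2 → ℚ, v ≠ 0 ∧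
      (Matrix.map ![![t - 2 + (m : ℤ) * ((q : ℤ) - 1), 2 * (q : ℤ) - t],
          ![t, 2 * (q : ℤ) - t - 2 + (m : ℤ) * ((q : ℤ) - 1)]]
          ((↑) : ℤ → ℚ)).mulVec v = (((q : ℚ) - 1) * ((m : ℚ) + 2) - 2 * q) • v) := by
  subst hq
  choose σ hσ using hcover
  have hpair : Pairwise (Disjoint on A) := hdisj
  have : Nonempty 𝒜 := Fintype.card_pos_iff.1 (by omega)
  have hset : {x : Fin (m + 2) → 𝒜 | ∃ i, x 0 ∈ A i ∧ (x 0, x i.succ) ∈ C}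
      = selectedPairSet σ C := by
    ext x
    simp only [Set.mem_ofPred_eq, mem_iff_eq_of_pairwise_disjoint hσ hpair, exists_eq_left']
    rfl
  rw [hset]
  refine ⟨isEquitable2_selectedPairSet ht0 ht1 (fun a => ?_)
    (two_mul_ncard_setOf_mem_eq hσ hpair fun i b => ?_),
    exists_ne_zero_quotientMatrix_mulVec_eq_smul _ m ht0.ne'⟩
  · rw [← ncard_inter_setOf_fst_eq]
    exact hrow _ a (hσ a)
  · obtain hempty | ⟨a, ha⟩ := (A i).eq_empty_or_nonempty
    · simp [hempty]
    · exact hcol i a ha b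

/-- Construction A; here `n = m + 2 ≥ 2`: Let `A₁, …, A_{n-1}` partition
`𝒜` (with `|𝒜| = q`) into nonempty sets, and let `C ⊆ 𝒜 × 𝒜` and `0 < t < 2q` satisfy
the row/column distribution conditions. Define
`C_π⁺ = {x ∈ 𝒜ⁿ : (x₁, x_{i+1}) ∈ C where i is the unique index with x₁ ∈ A_i}`.
Then `(C_π⁺, its complement)` is an equitable 2-partition of `H(n,q)` with quotient
matrix `[[t-2+(n-2)(q-1), 2q-t], [t, 2q-t-2+(n-2)(q-1)]]`, which has eigenvalue
`λ₂(n,q) = (q-1)n - 2q`. -/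
theorem stmt8 {𝒜 : Type*} [Fintype 𝒜] [DecidableEq 𝒜] (q : ℕ)
    (hq : Fintype.card 𝒜 = q) (hq2 : 2 ≤ q)
    (m : ℕ) (A : Fin (m + 1) → Set 𝒜)
    (hne : ∀ i, (A i).Nonempty)
    (hdisj : ∀ i j, i ≠ j → Disjoint (A i) (A j))
    (hcover : ∀ a : 𝒜, ∃ i, a ∈ A i)
    (C : Set (𝒜 × 𝒜)) (t : ℤ) (ht0 : 0 < t) (ht1 : t < 2 * q)
    (hrow : ∀ (i : Fin (m + 1)), ∀ a ∈ A i,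
      2 * ((C ∩ {p : 𝒜 × 𝒜 | p.1 = a}).ncard : ℤ) = t)
    (hcol : ∀ (i : Fin (m + 1)), ∀ a ∈ A i, ∀ b : 𝒜,
      2 * (q : ℤ) * ((C ∩ (A i ×ˢ ({b} : Set 𝒜))).ncard : ℤ) = t * ((A i).ncard : ℤ)) :
    IsEquitable2 (hammingGraph (m + 2) 𝒜)
      {x : Fin (m + 2) → 𝒜 | ∃ i : Fin (m + 1), x 0 ∈ A i ∧ (x 0, x i.succ) ∈ C}
      ![![t - 2 + (m : ℤ) * ((q : ℤ) - 1), 2 * (q : ℤ) - t],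
        ![t, 2 * (q : ℤ) - t - 2 + (m : ℤ) * ((q : ℤ) - 1)]] ∧
    (∃ v : Fin 2 → ℚ, v ≠ 0 ∧
      (Matrix.map ![![t - 2 + (m : ℤ) * ((q : ℤ) - 1), 2 * (q : ℤ) - t],
          ![t, 2 * (q : ℤ) - t - 2 + (m : ℤ) * ((q : ℤ) - 1)]]
          ((↑) : ℤ → ℚ)).mulVec v = (((q : ℚ) - 1) * ((m : ℚ) + 2) - 2 * q) • v) :=
  stmt8_general q hq m A hdisj hcover C t ht0 ht1 hrow hcol
end
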